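/- arXiv:2004.07475 — 5 statements merged into one kernel-verified Lean document; each statement's English description precedes it below -/
import Mathlib

section
/- Let ψ₀,…,ψₙ be real numbers with ψ₀ = ψₙ and ∑_{k=0}^{n-1} ψ_k = 0. Then ∑_{k=0}^{n-1} (ψ_{k+1} − ψ_k)² ≥ 4 sin²(π/n) ∑_{k=0}^{n-1} ψ_k². -/
open Real Finset
open scoped RealInnerProductSpace

abbrev E2 := EuclideanSpace ℝ (Fin 2)

/-- Rotation by π/2 in the plane. -/
noncomputable def Rot (v : E2) : E2 :=
  (WithLp.equiv 2 (Fin 2 → ℝ)).symm ![-v 1, v 0]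

/-- Rotation by angle θ in the plane. -/
noncomputable def RotBy (θ : ℝ) (v : E2) : E2 :=
  (WithLp.equiv 2 (Fin 2 → ℝ)).symm
    ![Real.cos θ * v 0 - Real.sin θ * v 1, Real.sin θ * v 0 + Real.cos θ * v 1]

/-!
Read ψ as a function on `ZMod n` (this is where `ψ 0 = ψ n` enters). With `ψ̂` its discrete
Fourier transform, the autocorrelation identity `∑ⱼ |ψ̂ⱼ|² e^{2πijt/n} = n ∑ₖ ψₖ₊ₜ ψₖ` gives
`n ∑ ψₖ² = ∑ⱼ |ψ̂ⱼ|²` and `n ∑ ψₖ₊₁ ψₖ = ∑ⱼ |ψ̂ⱼ|² cos (2πj/n)`. The mean-zero condition kills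
`ψ̂₀`, and `cos (2πj/n) ≤ cos (2π/n)` for `0 < j < n`, so `∑ ψₖ₊₁ ψₖ ≤ cos (2π/n) ∑ ψₖ²`.
Finally `∑ (ψₖ₊₁ - ψₖ)² = 2 ∑ ψₖ² - 2 ∑ ψₖ₊₁ ψₖ` and `2 - 2 cos (2π/n) = 4 sin² (π/n)`.
-/

open ComplexConjugate

lemma Real.cos_two_pi_mul_div_le {N x : ℝ} (h1 : 1 ≤ x) (h2 : x + 1 ≤ N) :
    cos (2 * π * x / N) ≤ cos (2 * π / N) := by
  have hN : 0 < N := by linarith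
  have hsub : cos (2 * π / N) - cos (2 * π * x / N) =
      2 * sin (π * (x + 1) / N) * sin (π * (x - 1) / N) := by
    rw [cos_sub_cos, show (2 * π / N + 2 * π * x / N) / 2 = π * (x + 1) / N by ring,
      show (2 * π / N - 2 * π * x / N) / 2 = -(π * (x - 1) / N) by ring, sin_neg]
    ring
  have hplus : 0 ≤ sin (π * (x + 1) / N) := by
    apply sin_nonneg_of_nonneg_of_le_pi (by positivity)
    rw [div_le_iff₀ hN]; nlinarith [pi_pos]
  have hminus : 0 ≤ sin (π * (x - 1) / N) := by
    apply sin_nonneg_of_nonneg_of_le_pi (div_nonneg (mul_nonneg pi_pos.le (by linarith)) hN.le)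
    rw [div_le_iff₀ hN]; nlinarith [pi_pos]
  rw [← sub_nonneg, hsub]
  exact mul_nonneg (mul_nonneg zero_le_two hplus) hminus

namespace ZMod

variable {N : ℕ} [NeZero N]

lemma sum_val_eq_sum_range {M : Type*} [AddCommMonoid M] (f : ℕ → M) :
    ∑ k : ZMod N, f k.val = ∑ k ∈ range N, f k :=
  Finset.sum_nbij (·.val) (fun a _ ↦ mem_range.2 a.val_lt)
    (fun _ _ _ _ h ↦ val_injective N h)
    (fun b hb ↦ ⟨b, mem_univ _, val_cast_of_lt (mem_range.1 hb)⟩) (fun _ _ ↦ rfl)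

lemma re_stdAddChar (j : ZMod N) : (stdAddChar j).re = cos (2 * π * j.val / N) := by
  rw [stdAddChar_apply, toCircle_apply,
    show 2 * π * Complex.I * j.val / N = ((2 * π * j.val / N : ℝ) : ℂ) * Complex.I by
      push_cast; ring, Complex.exp_ofReal_mul_I_re]

lemma re_stdAddChar_le {j : ZMod N} (hj : j ≠ 0) : (stdAddChar j).re ≤ cos (2 * π / N) := by
  rw [re_stdAddChar]
  apply cos_two_pi_mul_div_le
  · exact_mod_cast Nat.one_le_iff_ne_zero.2 ((val_ne_zero j).2 hj)
  · exact_mod_cast j.val_lt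

lemma sum_stdAddChar_mul (b : ZMod N) :
    ∑ j, stdAddChar (j * b) = if b = 0 then (N : ℂ) else 0 := by
  rw [AddChar.sum_mulShift _ (isPrimitive_stdAddChar N), ZMod.card]
  push_cast
  rfl

lemma sum_normSq_dft_mul_stdAddChar (Φ : ZMod N → ℂ) (t : ZMod N) :
    ∑ j, (Complex.normSq (𝓕 Φ j) : ℂ) * stdAddChar (j * t) =
      N * ∑ k, Φ (k + t) * conj (Φ k) := by
  have hchar (j k l : ZMod N) : stdAddChar (j * t) *
      (stdAddChar (-(k * j)) * conj (stdAddChar (-(l * j)))) = stdAddChar (j * (t + l - k)) := by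
    rw [AddChar.map_neg_eq_conj _ (l * j), Complex.conj_conj, ← AddChar.map_add_eq_mul,
      ← AddChar.map_add_eq_mul]
    ring_nf
  calc ∑ j, (Complex.normSq (𝓕 Φ j) : ℂ) * stdAddChar (j * t)
      = ∑ j, ∑ l, ∑ k, Φ k * conj (Φ l) * stdAddChar (j * (t + l - k)) := by
        refine sum_congr rfl fun j _ ↦ ?_
        rw [← Complex.mul_conj, dft_apply, map_sum, sum_mul_sum, sum_comm, sum_mul]
        refine sum_congr rfl fun l _ ↦ ?_
        rw [sum_mul]
        refine sum_congr rfl fun k _ ↦ ?_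
        rw [← hchar j k l, smul_eq_mul, smul_eq_mul, map_mul]
        ring
    _ = ∑ l, ∑ k, Φ k * conj (Φ l) * if l + t = k then (N : ℂ) else 0 := by
        rw [sum_comm]
        refine sum_congr rfl fun l _ ↦ ?_
        rw [sum_comm]
        refine sum_congr rfl fun k _ ↦ ?_
        simp only [← mul_sum, sum_stdAddChar_mul, sub_eq_zero, add_comm t, eq_comm]
    _ = N * ∑ k, Φ (k + t) * conj (Φ k) := by
        simp only [mul_ite, mul_zero, sum_ite_eq, mem_univ, if_true, mul_sum]
        exact sum_congr rfl fun _ _ ↦ by ring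

lemma sum_normSq_dft_mul_re_stdAddChar (Φ : ZMod N → ℝ) (t : ZMod N) :
    ∑ j, Complex.normSq (𝓕 (fun k ↦ (Φ k : ℂ)) j) * (stdAddChar (j * t)).re =
      N * ∑ k, Φ (k + t) * Φ k := by
  have h := congrArg Complex.re (sum_normSq_dft_mul_stdAddChar (fun k ↦ (Φ k : ℂ)) t)
  simp only [Complex.conj_ofReal, ← Complex.ofReal_mul, ← Complex.ofReal_sum,
    ← Complex.ofReal_natCast, Complex.re_ofReal_mul, Complex.re_sum] at h
  exact h

lemma sum_mul_add_one_le_cos_mul_sum_sq (Φ : ZMod N → ℝ) (hΦ : ∑ k, Φ k = 0) :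
    ∑ k, Φ (k + 1) * Φ k ≤ cos (2 * π / N) * ∑ k, Φ k ^ 2 := by
  set F := 𝓕 (fun k ↦ (Φ k : ℂ))
  have hF0 : F 0 = 0 := by
    simp only [F, dft_apply_zero]
    exact_mod_cast hΦ
  have hparseval : ∑ j, Complex.normSq (F j) = N * ∑ k, Φ k ^ 2 := by
    simpa [sq] using sum_normSq_dft_mul_re_stdAddChar Φ 0
  have hcorr : ∑ j, Complex.normSq (F j) * (stdAddChar j).re = N * ∑ k, Φ (k + 1) * Φ k := by
    simpa using sum_normSq_dft_mul_re_stdAddChar Φ 1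
  have hnonneg : 0 ≤ ∑ j, Complex.normSq (F j) * (cos (2 * π / N) - (stdAddChar j).re) := by
    refine sum_nonneg fun j _ ↦ ?_
    rcases eq_or_ne j 0 with rfl | hj
    · simp [hF0]
    · exact mul_nonneg (Complex.normSq_nonneg _) (sub_nonneg.2 (re_stdAddChar_le hj))
  have hexpand : ∑ j, Complex.normSq (F j) * (cos (2 * π / N) - (stdAddChar j).re) =
      N * (cos (2 * π / N) * ∑ k, Φ k ^ 2 - ∑ k, Φ (k + 1) * Φ k) := by
    simp only [mul_sub, sum_sub_distrib, ← sum_mul, hparseval, hcorr]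
    ring
  have hN : (0 : ℝ) < N := by exact_mod_cast NeZero.pos N
  nlinarith

theorem four_mul_sin_sq_mul_sum_sq_le (Φ : ZMod N → ℝ) (hΦ : ∑ k, Φ k = 0) :
    4 * sin (π / N) ^ 2 * ∑ k, Φ k ^ 2 ≤ ∑ k, (Φ (k + 1) - Φ k) ^ 2 := by
  have hshift : ∑ k, Φ (k + 1) ^ 2 = ∑ k, Φ k ^ 2 :=
    Fintype.sum_equiv (Equiv.addRight 1) _ _ fun _ ↦ rfl
  have hexpand : ∑ k, (Φ (k + 1) - Φ k) ^ 2 =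
      ∑ k, Φ (k + 1) ^ 2 + ∑ k, Φ k ^ 2 - 2 * ∑ k, Φ (k + 1) * Φ k := by
    simp only [sub_sq, sum_add_distrib, sum_sub_distrib, mul_sum, mul_assoc]
    ring
  rw [hexpand, hshift, sin_sq_eq_half_sub, show 2 * (π / N) = 2 * π / N by ring]
  linarith [sum_mul_add_one_le_cos_mul_sum_sq Φ hΦ]

lemma apply_val_add_one {α : Type*} {f : ℕ → α} (hf : f 0 = f N) (k : ZMod N) :
    f (k + 1).val = f (k.val + 1) := by
  rw [val_add, val_one_eq_one_mod, Nat.add_mod_mod]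
  obtain hlt | heq : k.val + 1 < N ∨ k.val + 1 = N := by have := k.val_lt; omega
  · rw [Nat.mod_eq_of_lt hlt]
  · rw [heq, Nat.mod_self, hf]

end ZMod

theorem discrete_wirtinger (n : ℕ) (hn : 1 ≤ n) (ψ : ℕ → ℝ)
    (hper : ψ 0 = ψ n) (hmean : ∑ k ∈ Finset.range n, ψ k = 0) :
    ∑ k ∈ Finset.range n, (ψ (k + 1) - ψ k) ^ 2 ≥
      4 * Real.sin (π / n) ^ 2 * ∑ k ∈ Finset.range n, (ψ k) ^ 2 := by
  have : NeZero n := ⟨by omega⟩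
  have h := ZMod.four_mul_sin_sq_mul_sum_sq_le (fun k : ZMod n ↦ ψ k.val)
    (by rw [ZMod.sum_val_eq_sum_range]; exact hmean)
  simp only [ZMod.apply_val_add_one hper, ZMod.sum_val_eq_sum_range (fun k ↦ ψ k ^ 2),
    ZMod.sum_val_eq_sum_range (fun k ↦ (ψ (k + 1) - ψ k) ^ 2)] at h
  exact h
end

section
/- Let p : ℤ/n → ℝ² be a closed discrete curve with l_k = |p_{k+1}−p_k|, unit normals ν_k = R((p_{k+1}−p_k)/l_k), turning angles θ_k defined by R_{θ_k}(ν_{k-1}) = ν_k, and κ ≠ 0. Then p is a critical point of L + κ·Vol (i.e., A_k := (ν_k − ν_{k-1}) + (κ/2)(p_{k+1} − p_{k-1}) = 0 for all k) if and only if there exist constants l₀ > 0 and θ₀ with l_k = l₀ and θ_k = θ₀ for all k and κ l₀ = 2 tan(θ₀/2). -/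
open Real Finset
open scoped RealInnerProductSpace

/-!
Write `w = ν_{k-1}`. Since `p_{k+1} - p_k = -l_k R ν_k` and `ν_k = R_{θ_k} w`, the vector `A_k` is
`a w + b R w` with `a = cos θ_k - 1 + (κ/2) l_k sin θ_k` and
`b = sin θ_k - (κ/2)(l_k cos θ_k + l_{k-1})`. As `w` and `R w` are independent, `A_k = 0` means
`a = b = 0`, which in half-angle coordinates says exactly `l_{k-1} = l_k` and
`κ l_k = 2 tan(θ_k/2)`. Equal consecutive lengths make the length constant around `ℤ/n`, and then
injectivity of `tan` on `(-π/2, π/2)` makes the angle constant.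
-/

theorem ZMod.apply_eq_apply_zero_of_forall_add_one {n : ℕ} {α : Type*} {f : ZMod n → α}
    (h : ∀ k, f (k + 1) = f k) (k : ZMod n) : f k = f 0 := by
  obtain ⟨m, rfl⟩ := ZMod.intCast_surjective k
  induction m using Int.induction_on with
  | zero => simp
  | succ m ih => rw [Int.cast_add, Int.cast_one, h, ih]
  | pred m ih => rw [← ih, Int.cast_sub, Int.cast_one, ← h, sub_add_cancel]

@[simp] lemma Rot_apply_zero (v : E2) : Rot v 0 = -v 1 := rfl

@[simp] lemma Rot_apply_one (v : E2) : Rot v 1 = v 0 := rfl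

lemma Rot_Rot (v : E2) : Rot (Rot v) = -v := by
  ext i; fin_cases i <;> simp

lemma Rot_ne_zero {v : E2} (hv : v ≠ 0) : Rot v ≠ 0 := by
  intro h
  apply hv
  ext i; fin_cases i
  · simpa using congrArg (· 1) h
  · simpa using congrArg (· 0) h

lemma smul_add_smul_Rot_eq_zero_iff {w : E2} (hw : w ≠ 0) (a b : ℝ) :
    a • w + b • Rot w = 0 ↔ a = 0 ∧ b = 0 := by
  refine ⟨fun h => ?_, fun ⟨ha, hb⟩ => by simp [ha, hb]⟩
  have h0 : a * w 0 - b * w 1 = 0 := by simpa [sub_eq_add_neg] using congrArg (· 0) h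
  have h1 : a * w 1 + b * w 0 = 0 := by simpa using congrArg (· 1) h
  have hw2 : w 0 ^ 2 + w 1 ^ 2 ≠ 0 := by
    have hnorm : ‖w‖ ^ 2 = w 0 ^ 2 + w 1 ^ 2 := by
      simp [EuclideanSpace.real_norm_sq_eq, Fin.sum_univ_two]
    exact hnorm ▸ pow_ne_zero 2 (norm_ne_zero_iff.2 hw)
  constructor
  · refine (mul_eq_zero.1 ?_).resolve_right hw2
    linear_combination w 0 * h0 + w 1 * h1
  · refine (mul_eq_zero.1 ?_).resolve_right hw2
    linear_combination w 0 * h1 - w 1 * h0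

lemma RotBy_sub_sub_smul_eq (θ κ l m : ℝ) (w : E2) :
    (RotBy θ w - w) - (κ / 2) • (l • Rot (RotBy θ w) + m • Rot w) =
      (cos θ - 1 + κ / 2 * l * sin θ) • w + (sin θ - κ / 2 * (l * cos θ + m)) • Rot w := by
  ext i; fin_cases i <;> simp [RotBy] <;> ring

lemma turning_equations_iff {κ l m θ : ℝ} (hκ : κ ≠ 0) (hlm : l + m ≠ 0)
    (hθ : cos (θ / 2) ≠ 0) :
    (cos θ - 1 + κ / 2 * l * sin θ = 0 ∧ sin θ - κ / 2 * (l * cos θ + m) = 0) ↔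
      (m = l ∧ κ * l = 2 * tan (θ / 2)) := by
  obtain ⟨φ, rfl⟩ : ∃ φ, θ = 2 * φ := ⟨θ / 2, by ring⟩
  rw [mul_div_cancel_left₀ φ two_ne_zero] at hθ ⊢
  rw [sin_two_mul, cos_two_mul, tan_eq_sin_div_cos, mul_div_assoc', eq_div_iff hθ]
  have hpyth := sin_sq_add_cos_sq φ
  constructor
  · rintro ⟨h1, h2⟩
    have hsin : sin φ * (κ * l * cos φ - 2 * sin φ) = 0 := by
      linear_combination h1 - 2 * hpyth
    have key : κ * l * cos φ = 2 * sin φ := by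
      rcases mul_eq_zero.1 hsin with hs | h
      · refine absurd ?_ (mul_ne_zero hκ hlm)
        linear_combination (-2) * h2 - 2 * κ * l * hpyth + (2 * κ * l * sin φ + 4 * cos φ) * hs
      · linarith
    refine ⟨mul_left_cancel₀ hκ ?_, key⟩
    linear_combination (-2) * h2 - 2 * cos φ * key
  · rintro ⟨rfl, key⟩
    constructor
    · linear_combination sin φ * key + 2 * hpyth
    · linear_combination (-cos φ) * key

lemma critical_at_vertex_iff {w : E2} (hw : w ≠ 0) {κ l m θ : ℝ} (hκ : κ ≠ 0)
    (hlm : l + m ≠ 0) (hθ : cos (θ / 2) ≠ 0) :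
    (RotBy θ w - w) - (κ / 2) • (l • Rot (RotBy θ w) + m • Rot w) = 0 ↔
      (m = l ∧ κ * l = 2 * tan (θ / 2)) := by
  rw [RotBy_sub_sub_smul_eq, smul_add_smul_Rot_eq_zero_iff hw, turning_equations_iff hκ hlm hθ]

lemma eq_neg_norm_smul_Rot_of_eq_Rot {e ν : E2} (he : e ≠ 0) (hν : ν = Rot (‖e‖⁻¹ • e)) :
    e = -(‖e‖ • Rot ν) := by
  rw [hν, Rot_Rot, smul_neg, neg_neg, smul_inv_smul₀ (norm_ne_zero_iff.2 he)]

lemma vertex_critical_iff {a b c ν₀ ν₁ : E2} {θ κ : ℝ} (hab : b ≠ a) (hbc : c ≠ b)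
    (hν₀ : ν₀ = Rot (‖b - a‖⁻¹ • (b - a))) (hν₁ : ν₁ = Rot (‖c - b‖⁻¹ • (c - b)))
    (hθ : RotBy θ ν₀ = ν₁) (hκ : κ ≠ 0) (hcos : cos (θ / 2) ≠ 0) :
    (ν₁ - ν₀) + (κ / 2) • (c - a) = 0 ↔ ‖b - a‖ = ‖c - b‖ ∧ κ * ‖c - b‖ = 2 * tan (θ / 2) := by
  have hab' : b - a ≠ 0 := sub_ne_zero.2 hab
  have hbc' : c - b ≠ 0 := sub_ne_zero.2 hbc
  have hν₀0 : ν₀ ≠ 0 := by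
    rw [hν₀]
    exact Rot_ne_zero (smul_ne_zero (inv_ne_zero (norm_ne_zero_iff.2 hab')) hab')
  have hca : c - a = -(‖c - b‖ • Rot ν₁) + -(‖b - a‖ • Rot ν₀) := by
    rw [← sub_add_sub_cancel c b a, ← eq_neg_norm_smul_Rot_of_eq_Rot hbc' hν₁,
      ← eq_neg_norm_smul_Rot_of_eq_Rot hab' hν₀]
  have hlen : ‖c - b‖ + ‖b - a‖ ≠ 0 :=
    (add_pos (norm_pos_iff.2 hbc') (norm_pos_iff.2 hab')).ne'
  rw [← critical_at_vertex_iff hν₀0 hκ hlen hcos, hθ, hca]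
  constructor <;> intro h <;> convert h using 1 <;> module

theorem critical_iff_regular_polygon_general (n : ℕ)
    (p : ZMod n → E2) (hreg : ∀ k, p (k + 1) ≠ p k)
    (ν : ZMod n → E2)
    (hν : ∀ k, ν k = Rot (‖p (k + 1) - p k‖⁻¹ • (p (k + 1) - p k)))
    (θ : ZMod n → ℝ) (hθrange : ∀ k, θ k ∈ Set.Ioo (-π) π)
    (hθ : ∀ k, RotBy (θ k) (ν (k - 1)) = ν k)
    (κ : ℝ) (hκ : κ ≠ 0) :
    (∀ k, (ν k - ν (k - 1)) + (κ / 2) • (p (k + 1) - p (k - 1)) = 0) ↔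
    (∃ l₀ θ₀ : ℝ, 0 < l₀ ∧ (∀ k, ‖p (k + 1) - p k‖ = l₀) ∧ (∀ k, θ k = θ₀) ∧
      κ * l₀ = 2 * Real.tan (θ₀ / 2)) := by
  have hhalf : ∀ k, θ k / 2 ∈ Set.Ioo (-(π / 2)) (π / 2) := fun k =>
    ⟨by linarith [(hθrange k).1], by linarith [(hθrange k).2]⟩
  have hcrit : ∀ k, (ν k - ν (k - 1)) + (κ / 2) • (p (k + 1) - p (k - 1)) = 0 ↔
      (‖p k - p (k - 1)‖ = ‖p (k + 1) - p k‖ ∧ κ * ‖p (k + 1) - p k‖ = 2 * tan (θ k / 2)) := by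
    intro k
    have hprev := hreg (k - 1)
    have hν' := hν (k - 1)
    rw [sub_add_cancel] at hprev hν'
    exact vertex_critical_iff hprev (hreg k) hν' (hν k) (hθ k) hκ
      (cos_pos_of_mem_Ioo (hhalf k)).ne'
  constructor
  · intro hA
    have hvert := fun k => (hcrit k).1 (hA k)
    have hconst : ∀ k, ‖p (k + 1) - p k‖ = ‖p (0 + 1) - p 0‖ :=
      ZMod.apply_eq_apply_zero_of_forall_add_one (f := fun k => ‖p (k + 1) - p k‖)
        fun k => by simpa using (hvert (k + 1)).1.symm
    refine ⟨_, θ 0, norm_pos_iff.2 (sub_ne_zero.2 (hreg 0)), hconst, fun k => ?_, (hvert 0).2⟩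
    have htan : tan (θ k / 2) = tan (θ 0 / 2) := by
      have hk := (hvert k).2
      rw [hconst k] at hk
      linarith [(hvert 0).2]
    linarith [injOn_tan (hhalf k) (hhalf 0) htan]
  · rintro ⟨l₀, θ₀, -, hl, hθ₀, htan⟩ k
    refine (hcrit k).2 ⟨?_, by rw [hl, hθ₀, htan]⟩
    simpa [hl] using hl (k - 1)

theorem critical_iff_regular_polygon (n : ℕ) [NeZero n]
    (p : ZMod n → E2) (hreg : ∀ k, p (k + 1) ≠ p k)
    (ν : ZMod n → E2)
    (hν : ∀ k, ν k = Rot (‖p (k + 1) - p k‖⁻¹ • (p (k + 1) - p k)))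
    (θ : ZMod n → ℝ) (hθrange : ∀ k, θ k ∈ Set.Ioo (-π) π)
    (hθ : ∀ k, RotBy (θ k) (ν (k - 1)) = ν k)
    (κ : ℝ) (hκ : κ ≠ 0) :
    (∀ k, (ν k - ν (k - 1)) + (κ / 2) • (p (k + 1) - p (k - 1)) = 0) ↔
    (∃ l₀ θ₀ : ℝ, 0 < l₀ ∧ (∀ k, ‖p (k + 1) - p k‖ = l₀) ∧ (∀ k, θ k = θ₀) ∧
      κ * l₀ = 2 * Real.tan (θ₀ / 2)) :=
  critical_iff_regular_polygon_general n p hreg ν hν θ hθrange hθ κ hκ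
end

section
/- Under the same setup (vertex normals N_k = (ν_k + ν_{k-1})/(1 + cos θ_k)), the squared norm |N_{k+1} − N_k|² equals (tan(θ_k/2) + tan(θ_{k+1}/2))². -/
open Real Finset
open scoped RealInnerProductSpace

/-! With `J = Rot`, a rotation is `R_θ v = cos θ • v + sin θ • J v`, so
`(1 + cos θ)⁻¹ • (R_θ v + v) = v + tan (θ / 2) • J v`. Expressing both `N k` and `N (k + 1)`
through the common edge normal `ν k` (using `ν (k - 1) = R_{-θ k} (ν k)`) gives
`N k = ν k - tan (θ k / 2) • J (ν k)` and `N (k + 1) = ν k + tan (θ (k + 1) / 2) • J (ν k)`;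
their difference is a multiple of the unit vector `J (ν k)`. -/

-- Holds for every `x`: when `cos (x / 2) = 0` both sides are the junk value `0`.
theorem tan_half_eq_sin_div_one_add_cos (x : ℝ) : tan (x / 2) = sin x / (1 + cos x) := by
  obtain ⟨y, rfl⟩ : ∃ y, x = 2 * y := ⟨x / 2, by ring⟩
  rw [mul_div_cancel_left₀ y two_ne_zero, tan_eq_sin_div_cos, sin_two_mul, cos_two_mul]
  rcases eq_or_ne (cos y) 0 with h | h
  · simp [h]
  · field_simp
    ring

theorem neg_one_lt_cos {x : ℝ} (hx : x ∈ Set.Ioo (-π) π) : -1 < cos x := by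
  rw [← cos_pi, ← cos_abs x]
  exact cos_lt_cos_of_nonneg_of_le_pi (abs_nonneg x) le_rfl (abs_lt.2 hx)

theorem norm_Rot (v : E2) : ‖Rot v‖ = ‖v‖ := by
  simp only [EuclideanSpace.norm_eq, Fin.sum_univ_two, Rot]
  simp [add_comm]

theorem RotBy_eq_cos_smul_add_sin_smul_Rot (θ : ℝ) (v : E2) :
    RotBy θ v = cos θ • v + sin θ • Rot v := by
  ext i
  fin_cases i <;> simp [RotBy, Rot] <;> ring

theorem RotBy_neg_RotBy (θ : ℝ) (v : E2) : RotBy (-θ) (RotBy θ v) = v := by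
  ext i
  fin_cases i <;>
    simp only [RotBy, cos_neg, sin_neg, WithLp.equiv_symm_apply, Fin.zero_eta, Fin.mk_one,
      Matrix.cons_val_zero, Matrix.cons_val_one, Matrix.cons_val_fin_one]
  · linear_combination v 0 * sin_sq_add_cos_sq θ
  · linear_combination v 1 * sin_sq_add_cos_sq θ

theorem inv_one_add_cos_smul_RotBy_add_self {θ : ℝ} (hθ : 1 + cos θ ≠ 0) (v : E2) :
    (1 + cos θ)⁻¹ • (RotBy θ v + v) = v + tan (θ / 2) • Rot v := by
  have : RotBy θ v + v = (1 + cos θ) • v + sin θ • Rot v := by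
    rw [RotBy_eq_cos_smul_add_sin_smul_Rot]
    module
  rw [this, smul_add, inv_smul_smul₀ hθ, tan_half_eq_sin_div_one_add_cos, div_eq_inv_mul, mul_smul]

theorem vertex_normal_diff_sq_general (n : ℕ)
    (p : ZMod n → E2) (hreg : ∀ k, p (k + 1) ≠ p k)
    (ν : ZMod n → E2)
    (hν : ∀ k, ν k = Rot (‖p (k + 1) - p k‖⁻¹ • (p (k + 1) - p k)))
    (θ : ZMod n → ℝ) (hθrange : ∀ k, θ k ∈ Set.Ioo (-π) π)
    (hθ : ∀ k, RotBy (θ k) (ν (k - 1)) = ν k)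
    (N : ZMod n → E2)
    (hN : ∀ k, N k = (1 + Real.cos (θ k))⁻¹ • (ν k + ν (k - 1))) :
    ∀ k : ZMod n,
      ‖N (k + 1) - N k‖ ^ 2 = (Real.tan (θ k / 2) + Real.tan (θ (k + 1) / 2)) ^ 2 := by
  intro k
  have hcos : ∀ j, 1 + cos (θ j) ≠ 0 := fun j => by linarith [neg_one_lt_cos (hθrange j)]
  have hunit : ‖Rot (ν k)‖ = 1 := by
    rw [norm_Rot, hν, norm_Rot, norm_smul, norm_inv, norm_norm,
      inv_mul_cancel₀ (norm_ne_zero_iff.2 (sub_ne_zero.2 (hreg k)))]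
  have hNk : N k = ν k - tan (θ k / 2) • Rot (ν k) := by
    have h := inv_one_add_cos_smul_RotBy_add_self (θ := -θ k) (by simpa using hcos k) (ν k)
    rw [← hθ k, RotBy_neg_RotBy, hθ k, cos_neg, neg_div, tan_neg, neg_smul] at h
    rw [hN, add_comm (ν k), h, sub_eq_add_neg]
  have hNk1 : N (k + 1) = ν k + tan (θ (k + 1) / 2) • Rot (ν k) := by
    rw [hN, ← hθ (k + 1), add_sub_cancel_right, inv_one_add_cos_smul_RotBy_add_self (hcos _)]
  rw [hNk1, hNk, add_sub_sub_cancel, ← add_smul, norm_smul, hunit, mul_one, norm_eq_abs, sq_abs,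
    add_comm]

theorem vertex_normal_diff_sq (n : ℕ) [NeZero n]
    (p : ZMod n → E2) (hreg : ∀ k, p (k + 1) ≠ p k)
    (ν : ZMod n → E2)
    (hν : ∀ k, ν k = Rot (‖p (k + 1) - p k‖⁻¹ • (p (k + 1) - p k)))
    (θ : ZMod n → ℝ) (hθrange : ∀ k, θ k ∈ Set.Ioo (-π) π)
    (hθ : ∀ k, RotBy (θ k) (ν (k - 1)) = ν k)
    (N : ZMod n → E2)
    (hN : ∀ k, N k = (1 + Real.cos (θ k))⁻¹ • (ν k + ν (k - 1))) :
    ∀ k : ZMod n,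
      ‖N (k + 1) - N k‖ ^ 2 = (Real.tan (θ k / 2) + Real.tan (θ (k + 1) / 2)) ^ 2 :=
  vertex_normal_diff_sq_general n p hreg ν hν θ hθrange hθ N hN
end

section
/- With the same regular-polygon setup (θ_k ≡ θ₀, N_k = (ν_k+ν_{k-1})/(1+cos θ₀), T_k = −RN_k), for v_k = ψ_k N_k + η_k T_k one has ⟨v_k, R v_{k+1}⟩ = −2 tan(θ₀/2)(ψ_k ψ_{k+1} + η_k η_{k+1}) − (1 − tan²(θ₀/2))(η_k ψ_{k+1} − η_{k+1} ψ_k). -/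
open Real Finset
open scoped RealInnerProductSpace

/-!
Write `ω a b = ⟪a, Rot b⟫`. Since `Rot` preserves `ω` and `⟪Rot a, b⟫ = -ω a b`, in the frame
`(N, T = -Rot N)` the left-hand side is
`(ψψ' + ηη') ω(N_k, N_{k+1}) - (ηψ' - η'ψ) ⟪N_k, N_{k+1}⟫`.
As `N_{k+1}` is `N_k` rotated by `θ₀`, these coefficients are `-sin θ₀ ‖N_k‖²` and
`cos θ₀ ‖N_k‖²`, and `‖N_k‖² = 2 / (1 + cos θ₀) = 1 + tan² (θ₀/2)` because the `ν` are unit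
vectors. The half-angle formulas `sin θ₀ (1 + t²) = 2t`, `cos θ₀ (1 + t²) = 1 - t²` finish.
-/

theorem norm_sq_eq_sq_add_sq (a : E2) : ‖a‖ ^ 2 = a 0 ^ 2 + a 1 ^ 2 := by
  simp [EuclideanSpace.norm_sq_eq, Fin.sum_univ_two]

theorem rot_add (a b : E2) : Rot (a + b) = Rot a + Rot b := by
  ext i; fin_cases i <;> simp [Rot]; ring

theorem rot_smul (r : ℝ) (a : E2) : Rot (r • a) = r • Rot a := by
  ext i; fin_cases i <;> simp [Rot]

theorem rot_neg (a : E2) : Rot (-a) = -Rot a := by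
  simpa using rot_smul (-1) a

theorem rot_rot (a : E2) : Rot (Rot a) = -a := by
  ext i; fin_cases i <;> simp [Rot]

theorem inner_rot_rot (a b : E2) : ⟪Rot a, Rot b⟫ = ⟪a, b⟫ := by
  simp [Rot, PiLp.inner_apply, Fin.sum_univ_two]; ring

theorem inner_rot_left (a b : E2) : ⟪Rot a, b⟫ = -⟪a, Rot b⟫ := by
  simp [Rot, PiLp.inner_apply, Fin.sum_univ_two]

theorem norm_rot (a : E2) : ‖Rot a‖ = ‖a‖ := by
  rw [norm_eq_sqrt_real_inner, inner_rot_rot, ← norm_eq_sqrt_real_inner]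

theorem rotBy_add (θ : ℝ) (a b : E2) : RotBy θ (a + b) = RotBy θ a + RotBy θ b := by
  ext i; fin_cases i <;> simp [RotBy] <;> ring

theorem rotBy_smul (θ r : ℝ) (a : E2) : RotBy θ (r • a) = r • RotBy θ a := by
  ext i; fin_cases i <;> simp [RotBy] <;> ring

theorem norm_rotBy (θ : ℝ) (a : E2) : ‖RotBy θ a‖ = ‖a‖ := by
  rw [← sq_eq_sq₀ (norm_nonneg _) (norm_nonneg _), norm_sq_eq_sq_add_sq, norm_sq_eq_sq_add_sq]
  simp only [RotBy, WithLp.equiv_symm_apply, PiLp.toLp_apply, Matrix.cons_val_zero,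
    Matrix.cons_val_one]
  linear_combination (a 0 ^ 2 + a 1 ^ 2) * sin_sq_add_cos_sq θ

theorem inner_rotBy_self (θ : ℝ) (a : E2) : ⟪a, RotBy θ a⟫ = cos θ * ‖a‖ ^ 2 := by
  rw [norm_sq_eq_sq_add_sq]; simp [RotBy, PiLp.inner_apply, Fin.sum_univ_two]; ring

theorem inner_rot_rotBy_self (θ : ℝ) (a : E2) : ⟪a, Rot (RotBy θ a)⟫ = -sin θ * ‖a‖ ^ 2 := by
  rw [norm_sq_eq_sq_add_sq]; simp [Rot, RotBy, PiLp.inner_apply, Fin.sum_univ_two]; ring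

theorem norm_rotBy_add_self_sq (θ : ℝ) (a : E2) :
    ‖RotBy θ a + a‖ ^ 2 = 2 * (1 + cos θ) * ‖a‖ ^ 2 := by
  rw [norm_add_sq_real, norm_rotBy, real_inner_comm, inner_rotBy_self]; ring

theorem inner_frame_rot_frame (a b : E2) (x y x' y' : ℝ) :
    ⟪x • a + y • -Rot a, Rot (x' • b + y' • -Rot b)⟫ =
      (x * x' + y * y') * ⟪a, Rot b⟫ - (y * x' - y' * x) * ⟪a, b⟫ := by
  simp only [rot_add, rot_smul, rot_neg, rot_rot, inner_add_left, inner_add_right,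
    real_inner_smul_left, real_inner_smul_right, inner_neg_left, inner_neg_right, inner_rot_left]
  ring

theorem cos_ne_neg_one_of_mem_Ioo {θ : ℝ} (hθ : θ ∈ Set.Ioo (-π) π) : cos θ ≠ -1 := by
  have : 0 < cos (θ / 2) := cos_pos_of_mem_Ioo ⟨by linarith [hθ.1], by linarith [hθ.2]⟩
  rw [show θ = 2 * (θ / 2) by ring, cos_two_mul]
  nlinarith

theorem cos_mul_one_add_tan_half_sq {θ : ℝ} (hθ : cos θ ≠ -1) :
    cos θ * (1 + tan (θ / 2) ^ 2) = 1 - tan (θ / 2) ^ 2 := by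
  rw [cos_eq_two_mul_tan_half_div_one_sub_tan_half_sq θ hθ]
  field_simp

theorem sin_mul_one_add_tan_half_sq (θ : ℝ) :
    sin θ * (1 + tan (θ / 2) ^ 2) = 2 * tan (θ / 2) := by
  rw [sin_eq_two_mul_tan_half_div_one_add_tan_half_sq θ]
  field_simp

theorem one_add_cos_mul_one_add_tan_half_sq {θ : ℝ} (hθ : cos θ ≠ -1) :
    (1 + cos θ) * (1 + tan (θ / 2) ^ 2) = 2 := by
  linear_combination cos_mul_one_add_tan_half_sq hθ

theorem secondVariation_volume_part_general (n : ℕ) [NeZero n]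
    (p : ZMod n → E2) (hreg : ∀ k, p (k + 1) ≠ p k)
    (ν : ZMod n → E2)
    (hν : ∀ k, ν k = Rot (‖p (k + 1) - p k‖⁻¹ • (p (k + 1) - p k)))
    (θ₀ : ℝ) (hθ₀range : θ₀ ∈ Set.Ioo (-π) π)
    (hθ : ∀ k, RotBy θ₀ (ν (k - 1)) = ν k)
    (N T : ZMod n → E2)
    (hN : ∀ k, N k = (1 + Real.cos θ₀)⁻¹ • (ν k + ν (k - 1)))
    (hT : ∀ k, T k = -Rot (N k))
    (ψ η : ZMod n → ℝ) (v : ZMod n → E2)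
    (hv : ∀ k, v k = ψ k • N k + η k • T k) :
    ∀ k : ZMod n,
      ⟪v k, Rot (v (k + 1))⟫ =
        -2 * Real.tan (θ₀ / 2) * (ψ k * ψ (k + 1) + η k * η (k + 1)) -
          (1 - Real.tan (θ₀ / 2) ^ 2) * (η k * ψ (k + 1) - η (k + 1) * ψ k) := by
  intro k
  have hcos : cos θ₀ ≠ -1 := cos_ne_neg_one_of_mem_Ioo hθ₀range
  have hunit : ‖ν (k - 1)‖ = 1 := by
    have hstep : p (k - 1 + 1) - p (k - 1) ≠ 0 := sub_ne_zero.mpr (hreg _)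
    rw [hν, norm_rot, norm_smul, norm_inv, norm_norm, inv_mul_cancel₀ (norm_ne_zero_iff.mpr hstep)]
  have hN_succ : N (k + 1) = RotBy θ₀ (N k) := by
    rw [hN, hN, ← hθ (k + 1), add_sub_cancel_right, rotBy_smul, rotBy_add, hθ k]
  have hN_norm : ‖N k‖ ^ 2 = 1 + tan (θ₀ / 2) ^ 2 := by
    have hc : 1 + cos θ₀ ≠ 0 := fun h => hcos (by linarith)
    have h := one_add_cos_mul_one_add_tan_half_sq hcos
    rw [hN, ← hθ k, norm_smul, mul_pow, norm_rotBy_add_self_sq, hunit, norm_inv,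
      Real.norm_eq_abs, inv_pow, sq_abs]
    field_simp
    linear_combination -h
  rw [hv, hv, hT, hT, hN_succ, inner_frame_rot_frame, inner_rotBy_self, inner_rot_rotBy_self,
    hN_norm]
  linear_combination (-(ψ k * ψ (k + 1) + η k * η (k + 1))) * sin_mul_one_add_tan_half_sq θ₀ -
    (η k * ψ (k + 1) - η (k + 1) * ψ k) * cos_mul_one_add_tan_half_sq hcos

theorem secondVariation_volume_part (n : ℕ) [NeZero n]
    (p : ZMod n → E2) (hreg : ∀ k, p (k + 1) ≠ p k)
    (ν : ZMod n → E2)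
    (hν : ∀ k, ν k = Rot (‖p (k + 1) - p k‖⁻¹ • (p (k + 1) - p k)))
    (θ₀ : ℝ) (hθ₀range : θ₀ ∈ Set.Ioo (-π) π) (hθ₀ : θ₀ ≠ 0)
    (hθ : ∀ k, RotBy θ₀ (ν (k - 1)) = ν k)
    (N T : ZMod n → E2)
    (hN : ∀ k, N k = (1 + Real.cos θ₀)⁻¹ • (ν k + ν (k - 1)))
    (hT : ∀ k, T k = -Rot (N k))
    (ψ η : ZMod n → ℝ) (v : ZMod n → E2)
    (hv : ∀ k, v k = ψ k • N k + η k • T k) :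
    ∀ k : ZMod n,
      ⟪v k, Rot (v (k + 1))⟫ =
        -2 * Real.tan (θ₀ / 2) * (ψ k * ψ (k + 1) + η k * η (k + 1)) -
          (1 - Real.tan (θ₀ / 2) ^ 2) * (η k * ψ (k + 1) - η (k + 1) * ψ k) :=
  secondVariation_volume_part_general n p hreg ν hν θ₀ hθ₀range hθ N T hN hT ψ η v hv
end

section
/- Let n ≥ 5, 2 ≤ m ≤ n−2 with m/n ≠ 1/2, θ₀ = 2mπ/n, l₀ > 0, κ l₀ = 2 tan(θ₀/2). For ψ_k = A cos(2πk/n) + B sin(2πk/n) with (A,B) ≠ (0,0), the quadratic form Q(ψ) = ∑_{k=0}^{n-1} (1/l₀)[(ψ_{k+1} − ψ_k)² − 4 ψ_k ψ_{k+1} tan²(mπ/n)] satisfies Q(ψ) = (4/l₀)[sin²(π/n) − cos(2π/n) tan²(mπ/n)] ∑_k ψ_k², and Q(ψ) < 0. -/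
open Real Finset
open scoped RealInnerProductSpace

/-!
A first Fourier mode `ψ k = A cos (2πk/n) + B sin (2πk/n)` has autocorrelations
`∑ₖ ψ (k + i) ψ (k + j) = (n (A² + B²) / 2) cos (2π (j - i) / n)`: by the product-to-sum formulas
the remaining terms are second harmonics `e^{4πik/n}`, which sum to zero over a period once `n ≥ 3`.
Hence the quadratic form is `(1/l₀) (2 - (2 + 4 tan² (mπ/n)) cos (2π/n)) ∑ ψₖ²`, which is the claimed
identity since `1 - cos (2π/n) = 2 sin² (π/n)`. Its sign is that of
`sin² a cos² x - cos 2a sin² x` with `a = π/n`, `x = mπ/n ∈ [2a, π - 2a]`, `x ≠ π/2`; there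
`cos² x ≤ cos² 2a`, `sin² 2a ≤ sin² x`, and `sin² a cos 2a < sin² 2a = 4 sin² a cos² a`,
so it is negative as soon as `cos 2a > 0`, i.e. `n ≥ 5`.
-/

open Complex in
theorem sum_range_cexp_two_mul_add_eq_zero {n : ℕ} (hn : 3 ≤ n) (φ : ℝ) :
    ∑ k ∈ range n, cexp ((2 * (2 * π / n) * k + φ : ℝ) * I) = 0 := by
  set ζ := cexp (2 * π * I / n)
  have hζ : IsPrimitiveRoot ζ n := isPrimitiveRoot_exp n (by omega)
  have hterm (k : ℕ) : cexp ((2 * (2 * π / n) * k + φ : ℝ) * I) = cexp (φ * I) * (ζ ^ 2) ^ k := by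
    rw [← pow_mul, ← Complex.exp_nat_mul, ← Complex.exp_add]
    congr 1
    push_cast
    ring
  have hζ2n : (ζ ^ 2) ^ n = 1 := by rw [← pow_mul, mul_comm, pow_mul, hζ.pow_eq_one, one_pow]
  rw [sum_congr rfl fun k _ => hterm k, ← mul_sum,
    geom_sum_eq (hζ.pow_ne_one_of_pos_of_lt two_ne_zero (by omega)), hζ2n, sub_self, zero_div,
    mul_zero]

theorem sum_range_cos_two_mul_add_eq_zero {n : ℕ} (hn : 3 ≤ n) (φ : ℝ) :
    ∑ k ∈ range n, cos (2 * (2 * π / n) * k + φ) = 0 := by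
  have h := congrArg Complex.re (sum_range_cexp_two_mul_add_eq_zero hn φ)
  simpa only [Complex.re_sum, Complex.exp_ofReal_mul_I_re, Complex.zero_re] using h

theorem sum_range_sin_two_mul_add_eq_zero {n : ℕ} (hn : 3 ≤ n) (φ : ℝ) :
    ∑ k ∈ range n, sin (2 * (2 * π / n) * k + φ) = 0 := by
  have h := congrArg Complex.im (sum_range_cexp_two_mul_add_eq_zero hn φ)
  simpa only [Complex.im_sum, Complex.exp_ofReal_mul_I_im, Complex.zero_im] using h

theorem sinusoid_mul_sinusoid (A B u v : ℝ) :
    (A * cos u + B * sin u) * (A * cos v + B * sin v) =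
      (A ^ 2 + B ^ 2) / 2 * cos (v - u) + (A ^ 2 - B ^ 2) / 2 * cos (u + v) +
        A * B * sin (u + v) := by
  rw [cos_sub, cos_add, sin_add]
  ring

section FourierMode

variable {n : ℕ} {A B : ℝ} {ψ : ℕ → ℝ}

theorem sum_range_mul_shift_of_fourier_mode (hn : 3 ≤ n)
    (hψ : ∀ k : ℕ, ψ k = A * cos (2 * π * k / n) + B * sin (2 * π * k / n)) (i j : ℕ) :
    ∑ k ∈ range n, ψ (k + i) * ψ (k + j) =
      n * ((A ^ 2 + B ^ 2) / 2) * cos (2 * π * j / n - 2 * π * i / n) := by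
  have hterm (k : ℕ) : ψ (k + i) * ψ (k + j) =
      (A ^ 2 + B ^ 2) / 2 * cos (2 * π * j / n - 2 * π * i / n) +
        (A ^ 2 - B ^ 2) / 2 * cos (2 * (2 * π / n) * k + 2 * π * (i + j) / n) +
        A * B * sin (2 * (2 * π / n) * k + 2 * π * (i + j) / n) := by
    rw [hψ, hψ, sinusoid_mul_sinusoid]
    push_cast
    ring_nf
  rw [sum_congr rfl fun k _ => hterm k, sum_add_distrib, sum_add_distrib, sum_const, card_range,
    nsmul_eq_mul, ← mul_sum, ← mul_sum, sum_range_cos_two_mul_add_eq_zero hn,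
    sum_range_sin_two_mul_add_eq_zero hn]
  ring

theorem sum_second_variation_of_fourier_mode (hn : 3 ≤ n)
    (hψ : ∀ k : ℕ, ψ k = A * cos (2 * π * k / n) + B * sin (2 * π * k / n)) (l t : ℝ) :
    ∑ k ∈ range n, (1 / l) * ((ψ (k + 1) - ψ k) ^ 2 - 4 * ψ k * ψ (k + 1) * t ^ 2) =
      (4 / l) * (sin (π / n) ^ 2 - cos (2 * π / n) * t ^ 2) * ∑ k ∈ range n, ψ k ^ 2 := by
  have h00 := sum_range_mul_shift_of_fourier_mode hn hψ 0 0
  have h01 := sum_range_mul_shift_of_fourier_mode hn hψ 0 1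
  have h11 := sum_range_mul_shift_of_fourier_mode hn hψ 1 1
  simp only [add_zero, Nat.cast_zero, Nat.cast_one, mul_zero, mul_one, zero_div, sub_zero,
    sub_self, cos_zero, ← pow_two] at h00 h01 h11
  have hexpand (k : ℕ) : (1 / l) * ((ψ (k + 1) - ψ k) ^ 2 - 4 * ψ k * ψ (k + 1) * t ^ 2) =
      (1 / l) * ψ (k + 1) ^ 2 - ((2 + 4 * t ^ 2) / l) * (ψ k * ψ (k + 1)) + (1 / l) * ψ k ^ 2 := by
    ring
  have hcos : cos (2 * π / n) = 1 - 2 * sin (π / n) ^ 2 := by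
    rw [← cos_two_mul_eq_one_sub, mul_div_assoc]
  rw [sum_congr rfl fun k _ => hexpand k, sum_add_distrib, sum_sub_distrib, ← mul_sum, ← mul_sum,
    ← mul_sum, h00, h01, h11, hcos]
  ring

theorem sum_sq_pos_of_fourier_mode (hn : 3 ≤ n)
    (hψ : ∀ k : ℕ, ψ k = A * cos (2 * π * k / n) + B * sin (2 * π * k / n))
    (hAB : (A, B) ≠ (0, 0)) :
    0 < ∑ k ∈ range n, ψ k ^ 2 := by
  have h00 := sum_range_mul_shift_of_fourier_mode hn hψ 0 0
  simp only [add_zero, sub_self, cos_zero, mul_one, ← pow_two] at h00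
  have hA2B2 : 0 < A ^ 2 + B ^ 2 := by
    rcases eq_or_ne A 0 with rfl | hA
    · have hB : B ≠ 0 := by
        rintro rfl
        exact hAB rfl
      positivity
    · positivity
  rw [h00]
  have : (0 : ℝ) < n := by positivity
  positivity

end FourierMode

theorem sin_le_sin_of_le_of_le_pi_sub {x y : ℝ} (hy : 0 ≤ y) (hyx : y ≤ x) (hxy : x ≤ π - y) :
    sin y ≤ sin x := by
  rcases le_total x (π / 2) with h | h
  · exact sin_le_sin_of_le_of_le_pi_div_two (by linarith) h hyx
  · rw [← sin_pi_sub x]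
    exact sin_le_sin_of_le_of_le_pi_div_two (by linarith) (by linarith) (by linarith)

theorem sin_sq_lt_cos_two_mul_mul_tan_sq {a x : ℝ} (ha : 0 < a) (ha' : 4 * a < π)
    (hx : 2 * a ≤ x) (hx' : x ≤ π - 2 * a) (hcos : cos x ≠ 0) :
    sin a ^ 2 < cos (2 * a) * tan x ^ 2 := by
  have hsin_a : 0 < sin a := sin_pos_of_pos_of_lt_pi ha (by linarith)
  have hsin_2a : 0 < sin (2 * a) := sin_pos_of_pos_of_lt_pi (by linarith) (by linarith)
  have hcos_2a : 0 < cos (2 * a) := cos_pos_of_mem_Ioo ⟨by linarith, by linarith⟩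
  have hsin_x : sin (2 * a) ≤ sin x := sin_le_sin_of_le_of_le_pi_sub (by linarith) hx hx'
  have hcos_x : cos x ^ 2 ≤ cos (2 * a) ^ 2 := by
    nlinarith [sin_sq_add_cos_sq x, sin_sq_add_cos_sq (2 * a)]
  have hkey : sin a ^ 2 * cos (2 * a) < sin (2 * a) ^ 2 := by
    rw [sin_two_mul, cos_two_mul]
    nlinarith [mul_pos hsin_a hsin_a, sq_nonneg (sin a * cos a)]
  rw [tan_eq_sin_div_cos, div_pow, mul_div_assoc', lt_div_iff₀ (by positivity)]
  calc sin a ^ 2 * cos x ^ 2 ≤ sin a ^ 2 * cos (2 * a) ^ 2 := by gcongr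
    _ = sin a ^ 2 * cos (2 * a) * cos (2 * a) := by ring
    _ < sin (2 * a) ^ 2 * cos (2 * a) := by gcongr
    _ ≤ sin x ^ 2 * cos (2 * a) := by gcongr
    _ = cos (2 * a) * sin x ^ 2 := by ring

theorem sin_sq_pi_div_lt_cos_mul_tan_sq {n m : ℕ} (hn : 5 ≤ n) (hm1 : 2 ≤ m) (hm2 : m ≤ n - 2)
    (hhalf : 2 * m ≠ n) :
    sin (π / n) ^ 2 < cos (2 * π / n) * tan (m * π / n) ^ 2 := by
  set a := π / n
  have ha : 0 < a := by positivity
  have hn' : (5 : ℝ) ≤ n := by exact_mod_cast hn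
  have hm1' : (2 : ℝ) ≤ m := by exact_mod_cast hm1
  have hm2' : (m : ℝ) + 2 ≤ n := by exact_mod_cast (by omega : m + 2 ≤ n)
  have hπ : π = n * a := by
    simp only [a]
    field_simp
  have hx : (m * π / n : ℝ) = m * a := by ring
  have hcos : cos (m * a) ≠ 0 := by
    intro h
    have hmem : m * a ∈ Set.Icc 0 π := ⟨by positivity, by nlinarith⟩
    have hpi2 : π / 2 ∈ Set.Icc 0 π := ⟨by positivity, by linarith [pi_pos]⟩
    have : m * a = π / 2 := injOn_cos hmem hpi2 (h.trans cos_pi_div_two.symm)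
    exact hhalf (by exact_mod_cast (by nlinarith : (2 * m : ℝ) = n))
  rw [hx, mul_div_assoc]
  exact sin_sq_lt_cos_two_mul_mul_tan_sq ha (by nlinarith) (by nlinarith) (by nlinarith) hcos

theorem instability_nonconvex_regular_polygons_general (n m : ℕ) (hn : 5 ≤ n)
    (hm1 : 2 ≤ m) (hm2 : m ≤ n - 2) (hhalf : 2 * m ≠ n)
    (l₀ : ℝ) (hl : 0 < l₀)
    (A B : ℝ) (hAB : (A, B) ≠ (0, 0))
    (ψ : ℕ → ℝ)
    (hψ : ∀ k : ℕ, ψ k = A * Real.cos (2 * π * k / n) + B * Real.sin (2 * π * k / n)) :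
    (∑ k ∈ Finset.range n,
        (1 / l₀) * ((ψ (k + 1) - ψ k) ^ 2 - 4 * ψ k * ψ (k + 1) * Real.tan (m * π / n) ^ 2) =
      (4 / l₀) * (Real.sin (π / n) ^ 2 - Real.cos (2 * π / n) * Real.tan (m * π / n) ^ 2) *
        ∑ k ∈ Finset.range n, (ψ k) ^ 2)
    ∧ (∑ k ∈ Finset.range n,
        (1 / l₀) * ((ψ (k + 1) - ψ k) ^ 2 - 4 * ψ k * ψ (k + 1) * Real.tan (m * π / n) ^ 2) < 0) := by
  have hn3 : 3 ≤ n := by omega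
  have hQ := sum_second_variation_of_fourier_mode hn3 hψ l₀ (tan (m * π / n))
  have hcoeff : sin (π / n) ^ 2 - cos (2 * π / n) * tan (m * π / n) ^ 2 < 0 :=
    sub_neg.mpr (sin_sq_pi_div_lt_cos_mul_tan_sq hn hm1 hm2 hhalf)
  refine ⟨hQ, ?_⟩
  rw [hQ]
  exact mul_neg_of_neg_of_pos (mul_neg_of_pos_of_neg (by positivity) hcoeff)
    (sum_sq_pos_of_fourier_mode hn3 hψ hAB)

theorem instability_nonconvex_regular_polygons (n m : ℕ) (hn : 5 ≤ n)
    (hm1 : 2 ≤ m) (hm2 : m ≤ n - 2) (hhalf : 2 * m ≠ n)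
    (l₀ κ : ℝ) (hl : 0 < l₀)
    (hκ : κ * l₀ = 2 * Real.tan ((2 * m * π / n) / 2))
    (A B : ℝ) (hAB : (A, B) ≠ (0, 0))
    (ψ : ℕ → ℝ)
    (hψ : ∀ k : ℕ, ψ k = A * Real.cos (2 * π * k / n) + B * Real.sin (2 * π * k / n)) :
    (∑ k ∈ Finset.range n,
        (1 / l₀) * ((ψ (k + 1) - ψ k) ^ 2 - 4 * ψ k * ψ (k + 1) * Real.tan (m * π / n) ^ 2) =
      (4 / l₀) * (Real.sin (π / n) ^ 2 - Real.cos (2 * π / n) * Real.tan (m * π / n) ^ 2) *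
        ∑ k ∈ Finset.range n, (ψ k) ^ 2)
    ∧ (∑ k ∈ Finset.range n,
        (1 / l₀) * ((ψ (k + 1) - ψ k) ^ 2 - 4 * ψ k * ψ (k + 1) * Real.tan (m * π / n) ^ 2) < 0) :=
  instability_nonconvex_regular_polygons_general n m hn hm1 hm2 hhalf l₀ hl A B hAB ψ hψ
end
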